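/- Cut elimination holds for EQ_N: any sequent derivable in EQ_N (with the cut rule) is derivable in cf.EQ_N (without the cut rule). -/
import Mathlib


inductive Tm : Type
  | var : Nat → Tm
  | const : Nat → Tm
  | app : Nat → Tm → Tm

def Tm.subst (v : Nat) (r : Tm) : Tm → Tm
  | .var w => if w = v then r else .var w
  | .const c => .const c
  | .app f t => .app f (Tm.subst v r t)

def Tm.count (v : Nat) : Tm → Nat
  | .var w => if w = v then 1 else 0
  | .const _ => 0
  | .app _ t => t.count v

inductive Fml : Type
  | eq : Tm → Tm → Fml
  | atom : Nat → Tm → Fml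
  | imp : Fml → Fml → Fml
  | and : Fml → Fml → Fml
  | or : Fml → Fml → Fml
  | neg : Fml → Fml
  | all : Nat → Fml → Fml
  | ex : Nat → Fml → Fml

def Fml.subst (v : Nat) (r : Tm) : Fml → Fml
  | .eq t u => .eq (Tm.subst v r t) (Tm.subst v r u)
  | .atom p t => .atom p (Tm.subst v r t)
  | .imp A B => .imp (Fml.subst v r A) (Fml.subst v r B)
  | .and A B => .and (Fml.subst v r A) (Fml.subst v r B)
  | .or A B => .or (Fml.subst v r A) (Fml.subst v r B)
  | .neg A => .neg (Fml.subst v r A)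
  | .all x A => .all x (if x = v then A else Fml.subst v r A)
  | .ex x A => .ex x (if x = v then A else Fml.subst v r A)

def Fml.count (v : Nat) : Fml → Nat
  | .eq t u => t.count v + u.count v
  | .atom _ t => t.count v
  | .imp A B => A.count v + B.count v
  | .and A B => A.count v + B.count v
  | .or A B => A.count v + B.count v
  | .neg A => A.count v
  | .all x A => if x = v then 0 else A.count v
  | .ex x A => if x = v then 0 else A.count v

/-- Tags for the equality rules of the equational sequent calculi. -/
inductive EqRule | r1 | r2 | l1 | l2 | cng
  deriving DecidableEq

/-- Derivability in the equational sequent calculus.  Sequents have the form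
`Γ ⇒ F` with `Γ : List Fml` and `F : Fml`.  The calculus has logical axioms
`F ⇒ F`, reflexivity axioms `⇒ t = t`, the weak left structural rules
(weakening, exchange, contraction), the cut rule (enabled when `cut = true`),
and the equality rules `=₁`, `=₂`, `=₁ˡ`, `=₂ˡ` and `CNG`, each guarded by the
side condition `ok tag F v r s` (where `F` is the changing formula, `v` the
substituted variable and `r`, `s` the terms involved). -/
inductive Der (ok : EqRule → Fml → Nat → Tm → Tm → Prop) (cut : Bool) :
    List Fml → Fml → Prop
  | ax (F : Fml) : Der ok cut [F] F
  | refl (t : Tm) : Der ok cut [] (.eq t t)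
  | wk {Γ H} (F) : Der ok cut Γ H → Der ok cut (F :: Γ) H
  | exch {Γ₁ Γ₂ F G H} : Der ok cut (Γ₁ ++ F :: G :: Γ₂) H →
      Der ok cut (Γ₁ ++ G :: F :: Γ₂) H
  | contr {Γ F H} : Der ok cut (F :: F :: Γ) H → Der ok cut (F :: Γ) H
  | cutr {Γ Λ F H} : cut = true → Der ok cut Γ F → Der ok cut (F :: Λ) H →
      Der ok cut (Γ ++ Λ) H
  | eq1 {Γ F v r s} : ok .r1 F v r s → Der ok cut Γ (F.subst v r) →
      Der ok cut (.eq r s :: Γ) (F.subst v s)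
  | eq2 {Γ F v r s} : ok .r2 F v r s → Der ok cut Γ (F.subst v r) →
      Der ok cut (.eq s r :: Γ) (F.subst v s)
  | eq1l {Γ F v r s H} : ok .l1 F v r s → Der ok cut (F.subst v r :: Γ) H →
      Der ok cut (F.subst v s :: .eq r s :: Γ) H
  | eq2l {Γ F v r s H} : ok .l2 F v r s → Der ok cut (F.subst v r :: Γ) H →
      Der ok cut (F.subst v s :: .eq s r :: Γ) H
  | cng {Γ Λ F v r s} : ok .cng F v r s → Der ok cut Γ (F.subst v r) →
      Der ok cut Λ (.eq r s) → Der ok cut (Γ ++ Λ) (F.subst v s)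

/-- The side condition allowing exactly the equality rules in `tags`,
with no further restriction. -/
def allow (tags : List EqRule) : EqRule → Fml → Nat → Tm → Tm → Prop :=
  fun t _ _ _ _ => t ∈ tags


section CutElim

deriving instance DecidableEq for Tm
deriving instance DecidableEq for Fml

variable {ok : EqRule → Fml → Nat → Tm → Tm → Prop} {c : Bool}

/-- Permutation admissibility, strengthened over a prefix. -/
theorem Der.perm_aux {Γ Γ' : List Fml} (hp : Γ.Perm Γ') :
    ∀ (Δ : List Fml) {H}, Der ok c (Δ ++ Γ) H → Der ok c (Δ ++ Γ') H := by
  induction hp with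
  | nil => intro Δ H h; exact h
  | cons a _ ih =>
      intro Δ H h
      have := ih (Δ ++ [a]) (by simpa using h)
      simpa using this
  | swap a b l =>
      intro Δ H h
      exact Der.exch h
  | trans _ _ ih1 ih2 =>
      intro Δ H h
      exact ih2 Δ (ih1 Δ h)

theorem Der.perm {Γ Γ' : List Fml} {H} (hp : Γ.Perm Γ')
    (h : Der ok c Γ H) : Der ok c Γ' H := by
  simpa using Der.perm_aux hp [] (by simpa using h)

/-- Weakening by a whole list. -/
theorem Der.wkList (Δ : List Fml) {Γ H} (h : Der ok c Γ H) :
    Der ok c (Δ ++ Γ) H := by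
  induction Δ with
  | nil => exact h
  | cons a Δ ih => exact Der.wk a ih

/-- Contraction of a whole list. -/
theorem Der.contrList (Δ : List Fml) : ∀ {Γ H}, Der ok c (Δ ++ Δ ++ Γ) H →
    Der ok c (Δ ++ Γ) H := by
  induction Δ with
  | nil => intro Γ H h; exact h
  | cons a Δ ih =>
      intro Γ H h
      have h1 : Der ok c (a :: a :: (Δ ++ Δ ++ Γ)) H := by
        refine Der.perm ?_ h
        refine List.perm_iff_count.mpr fun x => ?_
        simp [List.count_cons, List.count_append]
        omega
      have h2 : Der ok c (a :: (Δ ++ Δ ++ Γ)) H := Der.contr h1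
      have h3 : Der ok c (Δ ++ Δ ++ (a :: Γ)) H := by
        refine Der.perm ?_ h2
        refine List.perm_iff_count.mpr fun x => ?_
        simp [List.count_cons, List.count_append]
        omega
      have h4 := ih h3
      refine Der.perm ?_ h4
      refine List.perm_iff_count.mpr fun x => ?_
      simp [List.count_cons, List.count_append]
      omega

/-- Multicut: cut all occurrences of `F` at once. -/
theorem Der.multicut {Γ F} (hΓ : Der (allow [.cng]) false Γ F) :
    ∀ {Δ H}, Der (allow [.cng]) false Δ H →
      Der (allow [.cng]) false (Γ ++ Δ.filter (fun G => G ≠ F)) H := by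
  intro Δ H h
  induction h with
  | ax G =>
      by_cases hGF : G = F
      · subst hGF; simpa using hΓ
      · simpa [hGF] using Der.wkList Γ (Der.ax G)
  | refl t => simpa using Der.wkList Γ (Der.refl t)
  | wk G h ih =>
      by_cases hGF : G = F
      · simpa [hGF] using ih
      · have : Der (allow [.cng]) false
            (G :: (Γ ++ List.filter (fun G => G ≠ F) _)) _ := Der.wk G ih
        refine Der.perm ?_ this
        refine List.perm_iff_count.mpr fun x => ?_
        simp [hGF, List.count_cons, List.count_append]
        omega
  | exch h ih =>
      refine Der.perm ?_ ih
      refine List.Perm.append_left Γ ?_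
      exact List.Perm.filter _ (List.Perm.append_left _ (List.Perm.swap _ _ _))
  | contr h ih =>
      rename_i Γ₀ G H'
      by_cases hGF : G = F
      · simpa [hGF] using ih
      · have h1 : Der (allow [.cng]) false
            (G :: G :: (Γ ++ List.filter (fun G => G ≠ F) Γ₀)) H' := by
          refine Der.perm ?_ ih
          refine List.perm_iff_count.mpr fun x => ?_
          simp [hGF, List.count_cons, List.count_append]
          omega
        have h2 := Der.contr h1
        refine Der.perm ?_ h2
        refine List.perm_iff_count.mpr fun x => ?_
        simp [hGF, List.count_cons, List.count_append]
        omega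
  | cutr hcut _ _ _ _ => exact absurd hcut (by simp)
  | eq1 hok _ _ => exact absurd hok (by simp [allow])
  | eq2 hok _ _ => exact absurd hok (by simp [allow])
  | eq1l hok _ _ => exact absurd hok (by simp [allow])
  | eq2l hok _ _ => exact absurd hok (by simp [allow])
  | cng hok h1 h2 ih1 ih2 =>
      rename_i A B G v r s
      have h3 := Der.cng hok ih1 ih2
      have h4 : Der (allow [.cng]) false
          (Γ ++ Γ ++ (A.filter (fun G => G ≠ F) ++ B.filter (fun G => G ≠ F)))
          (G.subst v s) := by
        refine Der.perm ?_ h3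
        refine List.perm_iff_count.mpr fun x => ?_
        simp [List.count_cons, List.count_append]
        omega
      have h5 := Der.contrList Γ h4
      refine Der.perm ?_ h5
      refine List.perm_iff_count.mpr fun x => ?_
      simp [List.count_cons, List.count_append, List.count_filter]

end CutElim

/-- Cut elimination for `EQ_N`: every sequent derivable in `EQ_N` (with cut) is
derivable in `cf.EQ_N` (without cut). -/
theorem cut_elimination_EQN (Γ : List Fml) (F : Fml)
    (h : Der (allow [.cng]) true Γ F) :
    Der (allow [.cng]) false Γ F := by
  induction h with
  | ax G => exact Der.ax G
  | refl t => exact Der.refl t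
  | wk G _ ih => exact Der.wk G ih
  | exch _ ih => exact Der.exch ih
  | contr _ ih => exact Der.contr ih
  | cutr hcut h1 h2 ih1 ih2 =>
      rename_i Γ' Λ G H'
      have hm := Der.multicut ih1 ih2
      have hm' : Der (allow [.cng]) false
          (Γ' ++ Λ.filter (fun x => x ≠ G)) H' := by
        simpa using hm
      have hw := Der.wkList (Λ.filter (fun x => x = G)) hm'
      refine Der.perm ?_ hw
      refine List.perm_iff_count.mpr fun x => ?_
      by_cases hx : x = G
      · subst hx
        have h0 : List.count x (Λ.filter (fun y => !decide (y = x))) = 0 :=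
          List.count_eq_zero.mpr (by simp)
        simp [List.count_append, List.count_filter, h0]
        omega
      · have h0 : List.count x (Λ.filter (fun y => decide (y = G))) = 0 :=
          List.count_eq_zero.mpr (by simp [hx])
        simp [List.count_append, List.count_filter, hx, h0]
  | eq1 hok _ _ => exact absurd hok (by simp [allow])
  | eq2 hok _ _ => exact absurd hok (by simp [allow])
  | eq1l hok _ _ => exact absurd hok (by simp [allow])
  | eq2l hok _ _ => exact absurd hok (by simp [allow])
  | cng hok h1 h2 ih1 ih2 => exact Der.cng hok ih1 ih2
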